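/- arXiv:2604.18243 — 3 statements merged into one kernel-verified Lean document; each statement's English description precedes it below -/
import Mathlib

section
/- For any given positive bond prices P^n(0,1), P^n(0,2), P^r(0,1), P^r(0,2) and any target price π > 0, there exist a finite probability space (Ω, Q) and positive processes (B^n_t)_{t=0,1,2}, (B^r_t)_{t=0,1,2} with B^n_0 = B^r_0 = 1 such that E[1/B^n_t] = P^n(0,t) and E[1/B^r_t] = P^r(0,t) for t = 1,2, and E[I_1/B^n_2] = π, where I_1 = B^n_1/B^r_1. -/
open Finset

/-- Non-uniqueness: any price `π > 0` for the basis instrument `E[I₁ / Bⁿ₂]` can be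
attained by some finite model calibrated to the given bond prices. -/
theorem best_estimate_not_unique (Pn1 Pn2 Pr1 Pr2 π : ℝ)
    (hPn1 : 0 < Pn1) (hPn2 : 0 < Pn2) (hPr1 : 0 < Pr1) (hPr2 : 0 < Pr2)
    (hπ : 0 < π) :
    ∃ (n : ℕ) (Q : Fin n → ℝ) (Bn Br : Fin n → Fin 3 → ℝ),
      (∀ ω, 0 < Q ω) ∧ (∑ ω, Q ω) = 1 ∧
      (∀ ω t, 0 < Bn ω t) ∧ (∀ ω t, 0 < Br ω t) ∧
      (∀ ω, Bn ω 0 = 1) ∧ (∀ ω, Br ω 0 = 1) ∧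
      (∑ ω, Q ω * (1 / Bn ω 1)) = Pn1 ∧ (∑ ω, Q ω * (1 / Bn ω 2)) = Pn2 ∧
      (∑ ω, Q ω * (1 / Br ω 1)) = Pr1 ∧ (∑ ω, Q ω * (1 / Br ω 2)) = Pr2 ∧
      (∑ ω, Q ω * ((Bn ω 1 / Br ω 1) / Bn ω 2)) = π := by
  set c : ℝ := π * Pn1 / (Pr1 * Pn2) with hc_def
  have hc : 0 < c := by positivity
  -- basic positive polynomial expressions in c
  have h1 : (0:ℝ) < 1 + 2*c := by linarith
  have h2 : (0:ℝ) < 2 + 3*c + 2*c^2 := by positivity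
  have h3 : (0:ℝ) < 1 + 2*c + 4*c^2 := by positivity
  have h4 : (0:ℝ) < 1 + 3*c + 3*c^2 := by positivity
  have h5 : (0:ℝ) < 1 + 2*c + 2*c^2 := by positivity
  have h6 : (0:ℝ) < 1 + c := by linarith
  set q : ℝ := c*(1+2*c+4*c^2)/((1+2*c)*(2+3*c+2*c^2)) with hq_def
  have hq0 : 0 < q := by positivity
  have hq1' : 1 - q = 2*(1+3*c+3*c^2)/((1+2*c)*(2+3*c+2*c^2)) := by
    rw [hq_def]; field_simp; ring
  have hq1 : 0 < 1 - q := by rw [hq1']; positivity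
  set a1 : ℝ := c*(1+2*c+4*c^2)/((2+3*c+2*c^2)*Pn1) with ha1_def
  set a2 : ℝ := (1+3*c+3*c^2)/(c*(2+3*c+2*c^2)*Pn1) with ha2_def
  set b1 : ℝ := c*(1+2*c+4*c^2)*(1+2*c+2*c^2)/((1+2*c)*(2+3*c+2*c^2)*(1+c)^2*Pn2) with hb1_def
  set b2 : ℝ := 2*(1+3*c+3*c^2)*(1+2*c+2*c^2)/((1+2*c)*(2+3*c+2*c^2)*c^2*Pn2) with hb2_def
  have ha1 : 0 < a1 := by rw [ha1_def]; positivity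
  have ha2 : 0 < a2 := by rw [ha2_def]; positivity
  have hb1 : 0 < b1 := by rw [hb1_def]; positivity
  have hb2 : 0 < b2 := by rw [hb2_def]; positivity
  refine ⟨2, ![q, 1-q], ![![1, a1, b1], ![1, a2, b2]],
    ![![1, 1/Pr1, 1/Pr2], ![1, 1/Pr1, 1/Pr2]], ?_, ?_, ?_, ?_, ?_, ?_, ?_, ?_, ?_, ?_, ?_⟩
  · intro ω; fin_cases ω <;> simp <;> linarith
  · simp [Fin.sum_univ_two]
  · intro ω t; fin_cases ω <;> fin_cases t <;>
      simp_all
  · intro ω t; fin_cases ω <;> fin_cases t <;> simp <;> positivity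
  · intro ω; fin_cases ω <;> simp
  · intro ω; fin_cases ω <;> simp
  · -- E[1/Bn 1] = Pn1
    simp only [Fin.sum_univ_two, Matrix.cons_val_zero, Matrix.cons_val_one, Matrix.head_cons,
      Matrix.cons_val_two, Matrix.tail_cons]
    rw [hq_def, ha1_def, ha2_def]
    field_simp
    ring
  · -- E[1/Bn 2] = Pn2
    simp only [Fin.sum_univ_two, Matrix.cons_val_zero, Matrix.cons_val_one, Matrix.head_cons,
      Matrix.cons_val_two, Matrix.tail_cons]
    rw [hq_def, hb1_def, hb2_def]
    field_simp
    ring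
  · -- E[1/Br 1] = Pr1
    simp only [Fin.sum_univ_two, Matrix.cons_val_zero, Matrix.cons_val_one, Matrix.head_cons,
      Matrix.cons_val_two, Matrix.tail_cons]
    field_simp
    ring
  · -- E[1/Br 2] = Pr2
    simp only [Fin.sum_univ_two, Matrix.cons_val_zero, Matrix.cons_val_one, Matrix.head_cons,
      Matrix.cons_val_two, Matrix.tail_cons]
    field_simp
    ring
  · -- E[(Bn1/Br1)/Bn2] = π
    simp only [Fin.sum_univ_two, Matrix.cons_val_zero, Matrix.cons_val_one, Matrix.head_cons,
      Matrix.cons_val_two, Matrix.tail_cons]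
    have hπ' : π = c * (Pr1 * Pn2) / Pn1 := by
      rw [hc_def]; field_simp
    rw [hπ', hq_def, ha1_def, ha2_def, hb1_def, hb2_def]
    field_simp
    ring
end

section
/- The function f(c, p) = p/c·r + ((1 − r·p)/(1 − c·p))·(1 − p), for fixed r > 0, takes every value in (0, ∞) as (c, p) ranges over the admissible parameter set; equivalently, the map (c^n_1, c^r_1, p_1) ↦ f(c^n_1, c^r_1, p_1) = (c^r_1/c^n_1)p_1 + ((1 − c^r_1 p_1)/(1 − c^n_1 p_1))(1 − p_1) is surjective onto (0, ∞) on the domain {c^n_1, c^r_1 > 0, p_1 ∈ (0, min{1, 1/c^n_1, 1/c^r_1})}. -/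
/-- Surjectivity onto `(0, ∞)` of the Best Estimate component over the admissible
parameter region. -/
theorem best_estimate_component_surjective (y : ℝ) (hy : 0 < y) :
    ∃ cn1 cr1 p1 : ℝ, 0 < cn1 ∧ 0 < cr1 ∧ 0 < p1 ∧
      p1 < min 1 (min (1 / cn1) (1 / cr1)) ∧
      cr1 / cn1 * p1 + (1 - cr1 * p1) / (1 - cn1 * p1) * (1 - p1) = y := by
  -- The value is affine in `cr1`, running from `(1 - p1) / (1 - cn1 * p1)` at `cr1 = 0` to
  -- `1 / cn1` at `cr1 = 1 / p1`; `cn1 = 1 / (1 + y)` and `p1 = 1 / (1 + y ^ 2)` put `y` strictly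
  -- between the two ends, and solving for `cr1` gives `y ^ 3 / (1 + y)`.
  refine ⟨1 / (1 + y), y ^ 3 / (1 + y), 1 / (1 + y ^ 2), by positivity, by positivity,
    by positivity, lt_min ?_ (lt_min ?_ ?_), ?_⟩
  · rw [div_lt_one (by positivity)]
    nlinarith
  · rw [one_div_one_div, div_lt_iff₀ (by positivity)]
    nlinarith
  · rw [one_div_div, div_lt_div_iff₀ (by positivity) (by positivity)]
    nlinarith
  · have hcr : 1 - y ^ 3 / (1 + y) * (1 / (1 + y ^ 2))
        = (1 + y + y ^ 2) / ((1 + y) * (1 + y ^ 2)) := by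
      field_simp
      ring
    have hcn : 1 - 1 / (1 + y) * (1 / (1 + y ^ 2))
        = y * (1 + y + y ^ 2) / ((1 + y) * (1 + y ^ 2)) := by
      field_simp
      ring
    rw [hcr, hcn]
    field_simp
    ring
end

section
/- If the actual (risk-neutral) one-period nominal rates exceed the technical rate in the sense that all discount factors satisfy E[1/B^n_t] < (1+i)^{−t} for t ≥ 1, and if two cash-flow streams (a_t) and (b_t) have equal present value under discounting at rate i (Σ_t a_t (1+i)^{−t} = Σ_t b_t (1+i)^{−t}) with (a_t − b_t) changing sign exactly once from positive to negative (a_t ≥ b_t for t < T and a_t ≤ b_t for t ≥ T, not all equal), then Σ_t a_t E[1/B^n_t] > Σ_t b_t E[1/B^n_t] whenever the market discount factors d_t = E[1/B^n_t] satisfy d_t/(1+i)^{−t} strictly decreasing in t. -/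
open Finset

/-!
Put `c t = (a t - b t) (1 + i)⁻ᵗ` and `w t = d t (1 + i)ᵗ`, so that `(a t - b t) d t = c t w t`.
The weights `c` sum to zero and change sign once, at `T`, while `w` is strictly decreasing;
hence `∑ c t w t = ∑ c t (w t - w T)`, a sum of nonnegative terms, and the term at any `t < T`
with `c t > 0` is strictly positive.
-/

section SingleCrossing

variable {ι R : Type*} [LinearOrder ι] [CommRing R] [LinearOrder R] [IsStrictOrderedRing R]
  {c w : ι → R} {T : ι}

theorem mul_sub_nonneg_of_single_crossing (hw : Antitone w)
    (hc_pos : ∀ t, t < T → 0 ≤ c t) (hc_neg : ∀ t, T ≤ t → c t ≤ 0) (t : ι) :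
    0 ≤ c t * (w t - w T) := by
  rcases lt_or_ge t T with htT | hTt
  · exact mul_nonneg (hc_pos t htT) (sub_nonneg.mpr (hw htT.le))
  · exact mul_nonneg_of_nonpos_of_nonpos (hc_neg t hTt) (sub_nonpos.mpr (hw hTt))

theorem sum_mul_pos_of_single_crossing {s : Finset ι} (hw : StrictAnti w)
    (hsum : ∑ t ∈ s, c t = 0) (hc_pos : ∀ t, t < T → 0 ≤ c t)
    (hc_neg : ∀ t, T ≤ t → c t ≤ 0) (hne : ∃ t ∈ s, c t ≠ 0) :
    0 < ∑ t ∈ s, c t * w t := by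
  obtain ⟨t₁, ht₁s, hct₁⟩ := exists_pos_of_sum_zero_of_exists_nonzero c hsum hne
  have ht₁T : t₁ < T := lt_of_not_ge fun hTt => (hc_neg t₁ hTt).not_gt hct₁
  have hshift : ∑ t ∈ s, c t * w t = ∑ t ∈ s, c t * (w t - w T) := by
    simp only [mul_sub, sum_sub_distrib, ← sum_mul, hsum, zero_mul, sub_zero]
  rw [hshift]
  exact sum_pos' (fun t _ => mul_sub_nonneg_of_single_crossing hw.antitone hc_pos hc_neg t)
    ⟨t₁, ht₁s, mul_pos hct₁ (sub_pos.mpr (hw ht₁T))⟩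

end SingleCrossing

theorem front_loading_increases_value_general
    (N : ℕ) (a b d : ℕ → ℝ) (i : ℝ) (hi : -1 < i)
    (hw : StrictAnti (fun t : ℕ => d t * (1 + i) ^ t))
    (hsupp : ∀ t, N ≤ t → a t = 0 ∧ b t = 0)
    (hpv : (∑ t ∈ range N, a t * ((1 + i) ^ t)⁻¹) =
           ∑ t ∈ range N, b t * ((1 + i) ^ t)⁻¹)
    (T : ℕ)
    (hcross1 : ∀ t, t < T → b t ≤ a t)
    (hcross2 : ∀ t, T ≤ t → a t ≤ b t)
    (hne : ∃ t, a t ≠ b t) :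
    (∑ t ∈ range N, b t * d t) < ∑ t ∈ range N, a t * d t := by
  have hpow : ∀ t : ℕ, 0 < (1 + i) ^ t := fun t => pow_pos (by linarith) t
  have hdisc : ∀ t : ℕ, 0 < ((1 + i) ^ t)⁻¹ := fun t => inv_pos.mpr (hpow t)
  set c : ℕ → ℝ := fun t => (a t - b t) * ((1 + i) ^ t)⁻¹
  have hcw : ∀ t, c t * (d t * (1 + i) ^ t) = a t * d t - b t * d t := fun t => by
    have := (hpow t).ne'
    simp only [c]
    field_simp
  have hsum : ∑ t ∈ range N, c t = 0 := by
    simp only [c, sub_mul, sum_sub_distrib, hpv, sub_self]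
  obtain ⟨t₀, ht₀⟩ := hne
  have ht₀N : t₀ < N := lt_of_not_ge fun h => ht₀ ((hsupp t₀ h).1.trans (hsupp t₀ h).2.symm)
  have key := sum_mul_pos_of_single_crossing (c := c) (T := T) hw hsum
    (fun t ht => mul_nonneg (sub_nonneg.mpr (hcross1 t ht)) (hdisc t).le)
    (fun t ht => mul_nonpos_of_nonpos_of_nonneg (sub_nonpos.mpr (hcross2 t ht)) (hdisc t).le)
    ⟨t₀, mem_range.mpr ht₀N, mul_ne_zero (sub_ne_zero.mpr ht₀) (hdisc t₀).ne'⟩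
  simpa only [hcw, sum_sub_distrib, sub_pos] using key

/-- One-crossing dominance: if two cash-flow streams have equal present value at the
technical rate `i`, the stream that is front-loaded (single sign change from `+` to `-`)
has strictly larger value under market discount factors whose ratio to the technical
discount factors is strictly decreasing. -/
theorem front_loading_increases_value
    (N : ℕ) (a b d : ℕ → ℝ) (i : ℝ) (hi : -1 < i)
    (hd0 : d 0 = 1) (hdpos : ∀ t, 0 < d t)
    (hd_lt : ∀ t, 1 ≤ t → d t < ((1 + i) ^ t)⁻¹)
    (hw : StrictAnti (fun t : ℕ => d t * (1 + i) ^ t))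
    (hsupp : ∀ t, N ≤ t → a t = 0 ∧ b t = 0)
    (hpv : (∑ t ∈ range N, a t * ((1 + i) ^ t)⁻¹) =
           ∑ t ∈ range N, b t * ((1 + i) ^ t)⁻¹)
    (T : ℕ)
    (hcross1 : ∀ t, t < T → b t ≤ a t)
    (hcross2 : ∀ t, T ≤ t → a t ≤ b t)
    (hne : ∃ t, a t ≠ b t) :
    (∑ t ∈ range N, b t * d t) < ∑ t ∈ range N, a t * d t :=
  front_loading_increases_value_general N a b d i hi hw hsupp hpv T hcross1 hcross2 hne
end
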